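/- arXiv:2209.12376 — 8 statements merged into one kernel-verified Lean document; each statement's English description precedes it below -/
import Mathlib

section
/- If complex numbers u, ub, ut, x, xb, xt, ubt, xbt satisfy ub*u + (p - q*x)*(q - P*xb)/x = 0 and ut*u + (p - q*x)*(Q - p*xt)/xt = 0 (with all needed denominators nonzero), and ubt satisfies the dKdV equation ubt - u = (B2 - a)/ut - (B - A)/ub, where p^2 = a - g, P^2 = A - g, q^2 = B - g, Q^2 = B2 - g, then the value of xbt computed from the B-equation shifted in l and the value of xbt computed from the C-equation shifted in m agree, both being xbt = Q*ut*((A - B)*(p - q*x) - q*u*ub*x) / (P*ub*((a - B2)*(p - q*x) - p*u*ut)); that is, system (2.6) is consistent around the cube. -/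
set_option maxHeartbeats 2000000


/-- CAC property of the system (2.6) coupling Hirota's dKdV equation and the
lattice sine-Gordon equation: the value `xbt` determined by the initial data
satisfies both shifted Bäcklund relations. -/
theorem dKdV_lsG_CAC_I
    (u ub ut ubt x xb xt xbt a A B B2 g p P q Q : ℂ)
    (hp : p ^ 2 = a - g) (hP : P ^ 2 = A - g)
    (hq : q ^ 2 = B - g) (hQ : Q ^ 2 = B2 - g)
    (hx : x ≠ 0) (hxt : xt ≠ 0) (hxb : xb ≠ 0) (hxbt : xbt ≠ 0)
    (hu : u ≠ 0) (hub : ub ≠ 0) (hut : ut ≠ 0)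
    (hden : P * ub * ((a - B2) * (p - q * x) - p * u * ut) ≠ 0)
    (hC : ub * u + (p - q * x) * (q - P * xb) / x = 0)
    (hB : ut * u + (p - q * x) * (Q - p * xt) / xt = 0)
    (hA : ubt - u = (B2 - a) / ut - (B - A) / ub)
    (hval : xbt = Q * ut * ((A - B) * (p - q * x) - q * u * ub * x) /
      (P * ub * ((a - B2) * (p - q * x) - p * u * ut))) :
    ubt * ut + (p - Q * xt) * (Q - P * xbt) / xt = 0 ∧
    ubt * ub + (P - q * xb) * (Q - P * xbt) / xbt = 0 := by
  have ha : a = p ^ 2 + g := by linear_combination -hp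
  have hA' : A = P ^ 2 + g := by linear_combination -hP
  have hB'' : B = q ^ 2 + g := by linear_combination -hq
  have hB2 : B2 = Q ^ 2 + g := by linear_combination -hQ
  subst ha hA' hB'' hB2
  have hP0 : P ≠ 0 := fun h => hden (by rw [h]; ring)
  have hden2 : (p ^ 2 + g - (Q ^ 2 + g)) * (p - q * x) - p * u * ut ≠ 0 := by
    intro h; exact hden (by rw [h]; ring)
  have hQ0 : Q ≠ 0 := by
    intro h; apply hxbt; rw [hval, h]; simp
  have hC' : ub * u * x + (p - q * x) * (q - P * xb) = 0 := by
    field_simp at hC; linear_combination hC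
  have hB' : ut * u * xt + (p - q * x) * (Q - p * xt) = 0 := by
    field_simp at hB; linear_combination hB
  have hpq : p - q * x ≠ 0 := by
    intro h
    rw [h] at hC'
    simp [hx] at hC'
    rcases hC' with h1 | h1
    · exact hub h1
    · exact hu h1
  have hd3 : p * (p - q * x) - u * ut ≠ 0 := by
    intro h
    have h2 : (p - q * x) * Q = 0 := by linear_combination hB' + xt * h
    rcases mul_eq_zero.mp h2 with h3 | h3
    · exact hpq h3
    · exact hQ0 h3
  have hxt' : xt = Q * (p - q * x) / (p * (p - q * x) - u * ut) := by
    field_simp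
    linear_combination -hB'
  have hxb' : xb = (ub * u * x + q * (p - q * x)) / (P * (p - q * x)) := by
    rw [eq_div_iff (mul_ne_zero hP0 hpq)]
    linear_combination -hC'
  have hubt : ubt = u + (Q ^ 2 + g - (p ^ 2 + g)) / ut - (q ^ 2 + g - (P ^ 2 + g)) / ub := by
    linear_combination hA
  have hnum : Q * ut * ((P ^ 2 + g - (q ^ 2 + g)) * (p - q * x) - q * u * ub * x) ≠ 0 := by
    intro h
    exact hxbt (by rw [hval, h, zero_div])
  set D1 := p * (p - q * x) - u * ut with hD1
  set D2 := P * ub * ((p ^ 2 + g - (Q ^ 2 + g)) * (p - q * x) - p * u * ut) with hD2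
  set N2 := Q * ut * ((P ^ 2 + g - (q ^ 2 + g)) * (p - q * x) - q * u * ub * x) with hN2
  have g1 : ubt * ut * xt + (p - Q * xt) * (Q - P * xbt) = 0 := by
    rw [hubt, hval, hxt']
    field_simp
    rw [hD1, hD2]
    ring
  have g2 : ubt * ub * xbt + (P - q * xb) * (Q - P * xbt) = 0 := by
    rw [hubt, hval, hxb']
    field_simp
    rw [hD2, hN2]
    ring
  constructor
  · field_simp
    linear_combination g1
  · field_simp
    linear_combination g2
end

section
/- If complex numbers x, xb, xt, X, Xb, Xt satisfy the two coupled relations (q - p*x)*(p - Q*xt)/x = (PP - QQ*X)*(QQ' - PP*Xt)/Xt and (q - p*x)*(P - q*xb)/xb = (PP - QQ*X)*(QQ - PP'*Xb)/X, together with the lattice sine-Gordon equation for xbt: xbt/x = ((P - q*xb)/(q - P*xb))*((Q - p*xt)/(p - Q*xt)), then Xbt computed from the three cube paths is unique and equals Xbt = QQ'*(p - Q*xt)*((PP'² - QQ²)*(PP - QQ*X)*xb + QQ*(P - q*xb)*(q - p*x)*X) / (PP'*(P - q*xb)*((PP² - QQ'²)*(PP - QQ*X)*x + PP*(q - p*x)*(p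 - Q*xt))), and this Xbt satisfies the lattice sine-Gordon equation Xbt/X = ((PP' - QQ*Xb)/(QQ - PP'*Xb))*((QQ' - PP*Xt)/(PP - QQ'*Xt)). -/
/-!
The relation (2.16b) is linear in `Xt` and (2.16c) is linear in `Xb`, so each determines one of
the two Möbius ratios in the lattice sine-Gordon equation for `X` as a rational function of the
data `x, xb, xt, X`. The product of these two rational functions is exactly `Xbt / X`.
-/

section MoebiusRatio

variable {K : Type*} [Field K] {α β Y u v : K}

theorem moebius_ratio_of_eq_mul_sub (h : u = v * (β - α * Y)) (hα : α ≠ 0) (hu : u ≠ 0) :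
    (α - β * Y) / (β - α * Y) = ((α ^ 2 - β ^ 2) * v + β * u) / (α * u) := by
  have hβαY : β - α * Y ≠ 0 := fun h0 => hu (by rw [h, h0, mul_zero])
  rw [div_eq_div_iff hβαY (mul_ne_zero hα hu)]
  linear_combination (α ^ 2 - β ^ 2) * h

theorem moebius_ratio_of_mul_eq_mul_sub (h : u * Y = v * (β - α * Y))
    (hαβY : α - β * Y ≠ 0) (hden : (α ^ 2 - β ^ 2) * v + α * u ≠ 0) :
    (β - α * Y) / (α - β * Y) = β * u / ((α ^ 2 - β ^ 2) * v + α * u) := by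
  rw [div_eq_div_iff hαβY hden]
  linear_combination (β ^ 2 - α ^ 2) * h

end MoebiusRatio

theorem lsG_autoBT_CAC_general
    (x xb xt X Xb Xt Xbt p P q Q PP PP' QQ QQ' : ℂ)
    (hx : x ≠ 0) (hxb : xb ≠ 0) (hX : X ≠ 0) (hXt : Xt ≠ 0)
    (h3 : QQ - PP' * Xb ≠ 0) (h4 : PP - QQ' * Xt ≠ 0)
    (hden : PP' * (P - q * xb) *
      ((PP ^ 2 - QQ' ^ 2) * (PP - QQ * X) * x + PP * (q - p * x) * (p - Q * xt)) ≠ 0)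
    (hB : (q - p * x) * (p - Q * xt) / x = (PP - QQ * X) * (QQ' - PP * Xt) / Xt)
    (hC : (q - p * x) * (P - q * xb) / xb = (PP - QQ * X) * (QQ - PP' * Xb) / X)
    (hval : Xbt = QQ' * (p - Q * xt) *
        ((PP' ^ 2 - QQ ^ 2) * (PP - QQ * X) * xb + QQ * (P - q * xb) * (q - p * x) * X) /
      (PP' * (P - q * xb) *
        ((PP ^ 2 - QQ' ^ 2) * (PP - QQ * X) * x + PP * (q - p * x) * (p - Q * xt)))) :
    Xbt / X = ((PP' - QQ * Xb) / (QQ - PP' * Xb)) * ((QQ' - PP * Xt) / (PP - QQ' * Xt)) := by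
  obtain ⟨hPP'Pxb, hD⟩ := mul_ne_zero_iff.mp hden
  obtain ⟨hPP', hPxb⟩ := mul_ne_zero_iff.mp hPP'Pxb
  rw [div_eq_div_iff hx hXt] at hB
  rw [div_eq_div_iff hxb hX] at hC
  have hqx : q - p * x ≠ 0 := by
    intro h0
    have hA : PP - QQ * X = 0 := by simpa [h0, h3, hxb] using hC
    exact hD (by rw [hA, h0]; ring)
  have hXb_ratio := moebius_ratio_of_eq_mul_sub (α := PP') (β := QQ) (Y := Xb)
    (u := (q - p * x) * (P - q * xb) * X) (v := (PP - QQ * X) * xb)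
    (by linear_combination hC) hPP' (by simp [hqx, hPxb, hX])
  have hXt_ratio := moebius_ratio_of_mul_eq_mul_sub (α := PP) (β := QQ') (Y := Xt)
    (u := (q - p * x) * (p - Q * xt)) (v := (PP - QQ * X) * x)
    (by linear_combination hB) h4 (by convert hD using 1; ring)
  rw [hval, hXb_ratio, hXt_ratio]
  field_simp

/-- CAC property of the system (2.16): the value `Xbt` computed from the three
cube paths is the stated rational expression, and it satisfies the lattice
sine-Gordon equation; hence (2.16b)-(2.16c) is a CAC-type auto-Bäcklund
transformation of the lattice sine-Gordon equation. -/
theorem lsG_autoBT_CAC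
    (x xb xt xbt X Xb Xt Xbt p P q Q PP PP' QQ QQ' lam : ℂ)
    (hPP : PP ^ 2 = p ^ 2 - lam) (hPP' : PP' ^ 2 = P ^ 2 - lam)
    (hQQ : QQ ^ 2 = q ^ 2 - lam) (hQQ' : QQ' ^ 2 = Q ^ 2 - lam)
    (hx : x ≠ 0) (hxb : xb ≠ 0) (hxt : xt ≠ 0) (hX : X ≠ 0) (hXt : Xt ≠ 0)
    (h1 : q - P * xb ≠ 0) (h2 : p - Q * xt ≠ 0)
    (h3 : QQ - PP' * Xb ≠ 0) (h4 : PP - QQ' * Xt ≠ 0)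
    (hden : PP' * (P - q * xb) *
      ((PP ^ 2 - QQ' ^ 2) * (PP - QQ * X) * x + PP * (q - p * x) * (p - Q * xt)) ≠ 0)
    (hB : (q - p * x) * (p - Q * xt) / x = (PP - QQ * X) * (QQ' - PP * Xt) / Xt)
    (hC : (q - p * x) * (P - q * xb) / xb = (PP - QQ * X) * (QQ - PP' * Xb) / X)
    (hlsG : xbt / x = ((P - q * xb) / (q - P * xb)) * ((Q - p * xt) / (p - Q * xt)))
    (hval : Xbt = QQ' * (p - Q * xt) *
        ((PP' ^ 2 - QQ ^ 2) * (PP - QQ * X) * xb + QQ * (P - q * xb) * (q - p * x) * X) /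
      (PP' * (P - q * xb) *
        ((PP ^ 2 - QQ' ^ 2) * (PP - QQ * X) * x + PP * (q - p * x) * (p - Q * xt)))) :
    Xbt / X = ((PP' - QQ * Xb) / (QQ - PP' * Xb)) * ((QQ' - PP * Xt) / (PP - QQ' * Xt)) :=
  lsG_autoBT_CAC_general x xb xt X Xb Xt Xbt p P q Q PP PP' QQ QQ' hx hxb hX hXt h3 h4 hden hB hC
    hval
end

section
/- Let L_{l,m} = [[q²/u - ub, -p*q/u],[P*q/u, -P*p/u]] and M_{l,m} = [[Q*q/u, -p*Q/u],[p*q/u, ut - p²/u]] with p² = a - g, P² = A - g, q² = B - g, Q² = B' - g. Then the compatibility L_{l,m+1}·M_{l,m} = M_{l+1,m}·L_{l,m} (i.e., replacing u→ut, ub→ubt, q→Q in L, and u→ub, p→P in M) holds for all values of the spectral parameter g if and only if ubt - u = (B' - a)/ut - (B - A)/ub. -/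
open Matrix

/-! The commutator `L_{l,m+1} M_{l,m} - M_{l+1,m} L_{l,m}` is the rank-one matrix
`(Q, P)ᵀ (q, -p)` times `E / u`, where `E = (Q² - p²)/ut - (q² - P²)/ub - (ubt - u)` is, by
`Q² - p² = B' - a` and `q² - P² = B - A`, the defect of the dKdV equation. Hence compatibility
for all `g` gives `E = 0` from any single `g` with `q Q ≠ 0`, and conversely. -/

section LaxPair

variable {K : Type*} [Field K]

/- The shifted matrices are `L_{l,m+1} = laxL ut ubt p P Q` and `M_{l+1,m} = laxM ub ubt P q Q`. -/
def laxL (u ub p P q : K) : Matrix (Fin 2) (Fin 2) K :=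
  !![q ^ 2 / u - ub, -(p * q) / u; P * q / u, -(P * p) / u]

def laxM (u ut p q Q : K) : Matrix (Fin 2) (Fin 2) K :=
  !![Q * q / u, -(p * Q) / u; p * q / u, ut - p ^ 2 / u]

theorem laxL_mul_laxM_sub_laxM_mul_laxL {u ub ut : K} (hu : u ≠ 0) (hub : ub ≠ 0)
    (hut : ut ≠ 0) (ubt p P q Q : K) :
    laxL ut ubt p P Q * laxM u ut p q Q - laxM ub ubt P q Q * laxL u ub p P q =
      (((Q ^ 2 - p ^ 2) / ut - (q ^ 2 - P ^ 2) / ub - (ubt - u)) / u) •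
        vecMulVec ![Q, P] ![q, -p] := by
  ext i j
  fin_cases i <;> fin_cases j <;>
    simp [laxL, laxM] <;>
    field_simp <;> ring

end LaxPair

theorem Lax_dKdV_CAC1_general
    (u ub ut ubt a A B B' : ℂ)
    (hu : u ≠ 0) (hub : ub ≠ 0) (hut : ut ≠ 0) :
    (∀ g p P q Q : ℂ, p ^ 2 = a - g → P ^ 2 = A - g → q ^ 2 = B - g → Q ^ 2 = B' - g →
      !![Q ^ 2 / ut - ubt, -(p * Q) / ut; P * Q / ut, -(P * p) / ut] *
        !![Q * q / u, -(p * Q) / u; p * q / u, ut - p ^ 2 / u] =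
      !![Q * q / ub, -(P * Q) / ub; P * q / ub, ubt - P ^ 2 / ub] *
        !![q ^ 2 / u - ub, -(p * q) / u; P * q / u, -(P * p) / u]) ↔
    ubt - u = (B' - a) / ut - (B - A) / ub := by
  show (∀ g p P q Q : ℂ, p ^ 2 = a - g → P ^ 2 = A - g → q ^ 2 = B - g → Q ^ 2 = B' - g →
    laxL ut ubt p P Q * laxM u ut p q Q = laxM ub ubt P q Q * laxL u ub p P q) ↔ _
  have commutator := laxL_mul_laxM_sub_laxM_mul_laxL hu hub hut ubt
  constructor
  · intro H
    obtain ⟨g, hg⟩ := Infinite.exists_notMem_finset ({B, B'} : Finset ℂ)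
    obtain ⟨p, hp⟩ := IsAlgClosed.exists_pow_nat_eq (a - g) two_pos
    obtain ⟨P, hP⟩ := IsAlgClosed.exists_pow_nat_eq (A - g) two_pos
    obtain ⟨q, hq⟩ := IsAlgClosed.exists_pow_nat_eq (B - g) two_pos
    obtain ⟨Q, hQ⟩ := IsAlgClosed.exists_pow_nat_eq (B' - g) two_pos
    have hq0 : q ≠ 0 := by rintro rfl; simp_all [sub_eq_zero, eq_comm]
    have hQ0 : Q ≠ 0 := by rintro rfl; simp_all [sub_eq_zero, eq_comm]
    have h00 := congrFun₂ (commutator p P q Q) 0 0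
    rw [sub_eq_zero.2 (H g p P q Q hp hP hq hQ)] at h00
    have defect : (Q ^ 2 - p ^ 2) / ut - (q ^ 2 - P ^ 2) / ub - (ubt - u) = 0 := by
      simpa [hu, hq0, hQ0] using h00.symm
    rw [hp, hP, hq, hQ] at defect
    linear_combination -defect
  · intro h g p P q Q hp hP hq hQ
    have defect : (Q ^ 2 - p ^ 2) / ut - (q ^ 2 - P ^ 2) / ub - (ubt - u) = 0 := by
      rw [hp, hP, hq, hQ, h]; ring
    rw [← sub_eq_zero]
    simpa only [defect, zero_div, zero_smul] using commutator p P q Q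

/-- The compatibility condition of the Lax pair (B.2b), holding for all values
of the spectral parameter `g`, is equivalent to Hirota's discrete KdV
equation. -/
theorem Lax_dKdV_CAC1
    (u ub ut ubt a A B B' : ℂ)
    (hu : u ≠ 0) (hub : ub ≠ 0) (hut : ut ≠ 0) (hubt : ubt ≠ 0) :
    (∀ g p P q Q : ℂ, p ^ 2 = a - g → P ^ 2 = A - g → q ^ 2 = B - g → Q ^ 2 = B' - g →
      !![Q ^ 2 / ut - ubt, -(p * Q) / ut; P * Q / ut, -(P * p) / ut] *
        !![Q * q / u, -(p * Q) / u; p * q / u, ut - p ^ 2 / u] =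
      !![Q * q / ub, -(P * Q) / ub; P * q / ub, ubt - P ^ 2 / ub] *
        !![q ^ 2 / u - ub, -(p * q) / u; P * q / u, -(P * p) / u]) ↔
    ubt - u = (B' - a) / ut - (B - A) / ub :=
  Lax_dKdV_CAC1_general u ub ut ubt a A B B' hu hub hut
end

section
/- Let τ : ℤ³ → ℂ be nowhere zero and satisfy both bilinear equations p*τ̂ₜ*τ̄ - q*τₜ*τ̂ᵦ + τ*τ̂ₜᵦ = 0 and q*τ̂ₜ*τ̄ - p*τₜ*τ̂ᵦ - τ̂*τₜᵦ = 0 at a point. Define ω = τ̂/τ (so ω̄ = τ̂ᵦ/τ̄, ω̃ = τ̂ₜ/τₜ, ωᵦₜ = τ̂ₜᵦ/τₜᵦ). Then ωᵦₜ/ω = (q*ω̄ - p*ω̃)/(q*ω̃ - p*ω̄), i.e., ω satisfies the lattice modified KdV equation. -/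
/-!
The bilinear equations express `τ τ̂ₜᵦ` and `τ̂ τₜᵦ` as the same two linear combinations of
`τ̂ₜ τ̄` and `τₜ τ̂ᵦ` that appear, after clearing the denominators `τₜ τ̄`, in the
right-hand side of the lattice mKdV equation.
-/

theorem div_sub_div_eq_mul_sub_mul {K : Type*} [Field K] (p q : K) {a b c d : K}
    (hc : c ≠ 0) (hd : d ≠ 0) :
    q * (a / c) - p * (b / d) = (q * (a * d) - p * (c * b)) / (c * d) := by
  field_simp

theorem div_sub_div_div_div_sub_div {K : Type*} [Field K] (p q : K) {a b c d : K}
    (hc : c ≠ 0) (hd : d ≠ 0) :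
    (q * (b / d) - p * (a / c)) / (q * (a / c) - p * (b / d)) =
      (q * (c * b) - p * (a * d)) / (q * (a * d) - p * (c * b)) := by
  rw [div_sub_div_eq_mul_sub_mul p q hc hd, div_sub_div_eq_mul_sub_mul p q hd hc, mul_comm d c,
    mul_comm d a, mul_comm b c, div_div_div_cancel_right₀ (mul_ne_zero hc hd)]

theorem tau_function_mKdV_general
    (τ : ℤ → ℤ → ℤ → ℂ) (l m n : ℤ) (p q : ℂ)
    (hτ : ∀ i j k : ℤ, τ i j k ≠ 0)
    (hbil1 : p * τ l (m + 1) (n + 1) * τ (l + 1) m n -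
        q * τ l (m + 1) n * τ (l + 1) m (n + 1) +
        τ l m n * τ (l + 1) (m + 1) (n + 1) = 0)
    (hbil2 : q * τ l (m + 1) (n + 1) * τ (l + 1) m n -
        p * τ l (m + 1) n * τ (l + 1) m (n + 1) -
        τ l m (n + 1) * τ (l + 1) (m + 1) n = 0) :
    (τ (l + 1) (m + 1) (n + 1) / τ (l + 1) (m + 1) n) / (τ l m (n + 1) / τ l m n) =
      (q * (τ (l + 1) m (n + 1) / τ (l + 1) m n) -
        p * (τ l (m + 1) (n + 1) / τ l (m + 1) n)) /
      (q * (τ l (m + 1) (n + 1) / τ l (m + 1) n) -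
        p * (τ (l + 1) m (n + 1) / τ (l + 1) m n)) := by
  have h_bar_tilde : τ l m n * τ (l + 1) (m + 1) (n + 1) =
      q * (τ l (m + 1) n * τ (l + 1) m (n + 1)) - p * (τ l (m + 1) (n + 1) * τ (l + 1) m n) := by
    linear_combination hbil1
  have h_hat : τ l m (n + 1) * τ (l + 1) (m + 1) n =
      q * (τ l (m + 1) (n + 1) * τ (l + 1) m n) - p * (τ l (m + 1) n * τ (l + 1) m (n + 1)) := by
    linear_combination -hbil2
  rw [div_div_div_eq, mul_comm (τ (l + 1) (m + 1) (n + 1)), mul_comm (τ (l + 1) (m + 1) n),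
    h_bar_tilde, h_hat, div_sub_div_div_div_sub_div p q (hτ _ _ _) (hτ _ _ _)]

/-- Lemma C.1, equation (C.3a): if `τ` satisfies the bilinear equations (3.4),
then `ω = τ̂/τ` satisfies the lattice modified KdV equation. -/
theorem tau_function_mKdV
    (τ : ℤ → ℤ → ℤ → ℂ) (l m n : ℤ) (p q : ℂ)
    (hτ : ∀ i j k : ℤ, τ i j k ≠ 0)
    (hbil1 : p * τ l (m + 1) (n + 1) * τ (l + 1) m n -
        q * τ l (m + 1) n * τ (l + 1) m (n + 1) +
        τ l m n * τ (l + 1) (m + 1) (n + 1) = 0)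
    (hbil2 : q * τ l (m + 1) (n + 1) * τ (l + 1) m n -
        p * τ l (m + 1) n * τ (l + 1) m (n + 1) -
        τ l m (n + 1) * τ (l + 1) (m + 1) n = 0)
    (hden : q * (τ l (m + 1) (n + 1) / τ l (m + 1) n) -
        p * (τ (l + 1) m (n + 1) / τ (l + 1) m n) ≠ 0) :
    (τ (l + 1) (m + 1) (n + 1) / τ (l + 1) (m + 1) n) / (τ l m (n + 1) / τ l m n) =
      (q * (τ (l + 1) m (n + 1) / τ (l + 1) m n) -
        p * (τ l (m + 1) (n + 1) / τ l (m + 1) n)) /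
      (q * (τ l (m + 1) (n + 1) / τ l (m + 1) n) -
        p * (τ (l + 1) m (n + 1) / τ (l + 1) m n)) :=
  tau_function_mKdV_general τ l m n p q hτ hbil1 hbil2
end

section
/- Let τ : ℤ³ → ℂ be nowhere zero and satisfy the bilinear equation (3.4b) at level n+1: q'*τ̂̂ₜ*τ̂ᵦ - p'*τ̂ₜ*τ̂̂ᵦ - τ̂̂*τ̂ₜᵦ = 0 (n+1 shift of q*τ̂ₜ*τ̄ - p*τₜ*τ̂ᵦ = τ̂*τₜᵦ) and (3.4a) at level n: p*τ̂ₜ*τ̄ - q*τₜ*τ̂ᵦ + τ*τ̂ₜᵦ = 0, where p' = p_{l,n+1}, q' = q_{m,n+1}. Define ω = τ̂/τ and shifts accordingly. Then ω*ω̂/(ω̄*ω̃) = (p'*ω̂ᵦ - q'*ω̂ₜ)/(p*ω̃ - q*ω̄), where ω̂ = τ̂̂/τ̂, ω̂ᵦ = τ̂̂ᵦ/τ̂ᵦ, ω̂ₜ = τ̂̂ₜ/τ̂ₜ. -/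
/-!
Dividing (3.4a) by `τₜ τᵦ` and (3.4b) at level `n+1` by `τ̂ₜ τ̂ᵦ` gives
`p ω̃ - q ω̄ = -τ τ̂ₜᵦ / (τₜ τᵦ)` and `p' ω̂ᵦ - q' ω̂ₜ = -τ̂̂ τ̂ₜᵦ / (τ̂ₜ τ̂ᵦ)`.
In the quotient of the two the common factor `τ̂ₜᵦ` cancels, leaving `τ̂̂ τₜ τᵦ / (τ τ̂ₜ τ̂ᵦ) = ω ω̂ / (ω̄ ω̃)`.
-/

theorem mul_div_sub_mul_div_eq_neg_div {K : Type*} [Field K] {p q a b c d e : K}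
    (hb : b ≠ 0) (hd : d ≠ 0) (h : p * a * d - q * b * c + e = 0) :
    p * (a / b) - q * (c / d) = -e / (b * d) := by
  rw [← mul_div_assoc, ← mul_div_assoc, div_sub_div _ _ hb hd]
  congr 1
  linear_combination h

theorem tau_function_second_relation_general
    (τ : ℤ → ℤ → ℤ → ℂ) (l m n : ℤ) (p q p' q' : ℂ)
    (hτ : ∀ i j k : ℤ, τ i j k ≠ 0)
    (hbilb : q' * τ l (m + 1) (n + 2) * τ (l + 1) m (n + 1) -
        p' * τ l (m + 1) (n + 1) * τ (l + 1) m (n + 2) -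
        τ l m (n + 2) * τ (l + 1) (m + 1) (n + 1) = 0)
    (hbila : p * τ l (m + 1) (n + 1) * τ (l + 1) m n -
        q * τ l (m + 1) n * τ (l + 1) m (n + 1) +
        τ l m n * τ (l + 1) (m + 1) (n + 1) = 0) :
    ((τ l m (n + 1) / τ l m n) * (τ l m (n + 2) / τ l m (n + 1))) /
      ((τ (l + 1) m (n + 1) / τ (l + 1) m n) * (τ l (m + 1) (n + 1) / τ l (m + 1) n)) =
    (p' * (τ (l + 1) m (n + 2) / τ (l + 1) m (n + 1)) -
        q' * (τ l (m + 1) (n + 2) / τ l (m + 1) (n + 1))) /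
      (p * (τ l (m + 1) (n + 1) / τ l (m + 1) n) -
        q * (τ (l + 1) m (n + 1) / τ (l + 1) m n)) := by
  have hnum : p' * (τ (l + 1) m (n + 2) / τ (l + 1) m (n + 1)) -
      q' * (τ l (m + 1) (n + 2) / τ l (m + 1) (n + 1)) =
      -(τ l m (n + 2) * τ (l + 1) (m + 1) (n + 1)) /
        (τ (l + 1) m (n + 1) * τ l (m + 1) (n + 1)) :=
    mul_div_sub_mul_div_eq_neg_div (hτ _ _ _) (hτ _ _ _) (by linear_combination -hbilb)
  have hden : p * (τ l (m + 1) (n + 1) / τ l (m + 1) n) -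
      q * (τ (l + 1) m (n + 1) / τ (l + 1) m n) =
      -(τ l m n * τ (l + 1) (m + 1) (n + 1)) / (τ l (m + 1) n * τ (l + 1) m n) :=
    mul_div_sub_mul_div_eq_neg_div (hτ _ _ _) (hτ _ _ _) hbila
  rw [hnum, hden]
  field_simp [hτ]

/-- Lemma C.1, equation (C.3b): from the bilinear equation (3.4b) at level
`n+1` and (3.4a) at level `n`, the function `ω = τ̂/τ` satisfies
`ω ω̂/(ω̄ ω̃) = (p' ω̂ᵦ - q' ω̂ₜ)/(p ω̃ - q ω̄)`. -/
theorem tau_function_second_relation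
    (τ : ℤ → ℤ → ℤ → ℂ) (l m n : ℤ) (p q p' q' : ℂ)
    (hτ : ∀ i j k : ℤ, τ i j k ≠ 0)
    (hbilb : q' * τ l (m + 1) (n + 2) * τ (l + 1) m (n + 1) -
        p' * τ l (m + 1) (n + 1) * τ (l + 1) m (n + 2) -
        τ l m (n + 2) * τ (l + 1) (m + 1) (n + 1) = 0)
    (hbila : p * τ l (m + 1) (n + 1) * τ (l + 1) m n -
        q * τ l (m + 1) n * τ (l + 1) m (n + 1) +
        τ l m n * τ (l + 1) (m + 1) (n + 1) = 0)
    (hden : p * (τ l (m + 1) (n + 1) / τ l (m + 1) n) -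
        q * (τ (l + 1) m (n + 1) / τ (l + 1) m n) ≠ 0) :
    ((τ l m (n + 1) / τ l m n) * (τ l m (n + 2) / τ l m (n + 1))) /
      ((τ (l + 1) m (n + 1) / τ (l + 1) m n) * (τ l (m + 1) (n + 1) / τ l (m + 1) n)) =
    (p' * (τ (l + 1) m (n + 2) / τ (l + 1) m (n + 1)) -
        q' * (τ l (m + 1) (n + 2) / τ l (m + 1) (n + 1))) /
      (p * (τ l (m + 1) (n + 1) / τ l (m + 1) n) -
        q * (τ (l + 1) m (n + 1) / τ (l + 1) m n)) :=
  tau_function_second_relation_general τ l m n p q p' q' hτ hbilb hbila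
end

section
/- Suppose nonzero complex numbers ω, ω̄, ω̃, ω̄̃ (=ωᵦₜ), ω̄̄, ω̃̃ and their further shifts satisfy the lattice mKdV equation ωᵦₜ*(q*ω̃ - p*ω̄) = ω*(q*ω̄ - p*ω̃) at the base point, its l-shift ω̄ᵦₜ*(q*ω̃ᵦ - P*ω̄̄) = ω̄*(q*ω̄̄ - P*ω̃ᵦ), and its m-shift ω̃ᵦₜ*(Q*ω̃̃ - p*ωᵦₜ) = ω̃*(Q*ωᵦₜ - p*ω̃̃), where ω̃ᵦ = ω̄ₜ = ωᵦₜ. Define x = ω̄/ω̃, xb = ω̄̄/ωᵦₜ, xt = ωᵦₜ/ω̃̃, xbt = ω̄ᵦₜ/ω̃ᵦₜ (computed from the shifted equations). Then x, xb, xt, xbt satisfy the lattice sine-Gordon equation xbt/x = ((P - q*xb)/(q - P*xb))*((Q - p*xt)/(p - Q*xt)). -/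
/-!
Dividing the `l`-shifted mKdV equation by `ω̄̃` writes `ω̄̄̃/ω̄` as a Möbius transformation
of `xb`, and dividing the `m`-shifted one by `ω̃̃` writes `ω̃/ω̃̃̄` as a Möbius transformation
of `xt`. Since `xbt / x = (ω̄̄̃/ω̄) · (ω̃/ω̃̃̄)`, their product is the lattice sine-Gordon equation.
-/

theorem div_eq_of_mul_sub_eq_mul_sub {K : Type*} [Field K] {a b u v w w' : K}
    (hu : u ≠ 0) (hw : w ≠ 0) (hden : a - b * (v / u) ≠ 0)
    (h : w' * (a * u - b * v) = w * (a * v - b * u)) :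
    w' / w = (a * (v / u) - b) / (a - b * (v / u)) := by
  rw [div_eq_div_iff hw hden]
  field_simp
  linear_combination h

theorem mKdV_to_lsG_general
    (ωb ωt ωbt ωbb ωtt ωbbt ωttb p P q Q x xb xt xbt : ℂ)
    (hωb : ωb ≠ 0) (hωbt : ωbt ≠ 0) (hωtt : ωtt ≠ 0) (hωttb : ωttb ≠ 0)
    (hmkdvL : ωbbt * (q * ωbt - P * ωbb) = ωb * (q * ωbb - P * ωbt))
    (hmkdvM : ωttb * (Q * ωtt - p * ωbt) = ωt * (Q * ωbt - p * ωtt))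
    (hx : x = ωb / ωt) (hxb : xb = ωbb / ωbt)
    (hxt : xt = ωbt / ωtt) (hxbt : xbt = ωbbt / ωttb)
    (he1 : q - P * xb ≠ 0) (he2 : p - Q * xt ≠ 0) :
    xbt / x = ((P - q * xb) / (q - P * xb)) * ((Q - p * xt) / (p - Q * xt)) := by
  subst hx hxb hxt hxbt
  have hL : ωbbt / ωb = (q * (ωbb / ωbt) - P) / (q - P * (ωbb / ωbt)) :=
    div_eq_of_mul_sub_eq_mul_sub hωbt hωb he1 hmkdvL
  -- the `m`-shifted equation read with `ω̃` and `ω̃̃̄` (and `p`, `Q`) exchanged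
  have hM : ωt / ωttb = (p * (ωbt / ωtt) - Q) / (p - Q * (ωbt / ωtt)) :=
    div_eq_of_mul_sub_eq_mul_sub hωtt hωttb he2 (by linear_combination hmkdvM)
  calc ωbbt / ωttb / (ωb / ωt) = ωbbt / ωb * (ωt / ωttb) := by rw [div_div_div_eq]; ring
    _ = _ := by rw [hL, hM]; ring

/-- Transformation from the lattice mKdV equation to the lattice sine-Gordon
equation: if `ω` satisfies the lattice mKdV equation (and its `l`- and
`m`-shifts), then `x = ω̄/ω̃` satisfies the lattice sine-Gordon equation. -/
theorem mKdV_to_lsG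
    (ω ωb ωt ωbt ωbb ωtt ωbbt ωttb p P q Q x xb xt xbt : ℂ)
    (hω : ω ≠ 0) (hωb : ωb ≠ 0) (hωt : ωt ≠ 0) (hωbt : ωbt ≠ 0)
    (hωbb : ωbb ≠ 0) (hωtt : ωtt ≠ 0) (hωbbt : ωbbt ≠ 0) (hωttb : ωttb ≠ 0)
    (hd1 : q * ωt - p * ωb ≠ 0) (hd2 : q * ωbt - P * ωbb ≠ 0)
    (hd3 : Q * ωtt - p * ωbt ≠ 0)
    (hmkdv : ωbt * (q * ωt - p * ωb) = ω * (q * ωb - p * ωt))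
    (hmkdvL : ωbbt * (q * ωbt - P * ωbb) = ωb * (q * ωbb - P * ωbt))
    (hmkdvM : ωttb * (Q * ωtt - p * ωbt) = ωt * (Q * ωbt - p * ωtt))
    (hx : x = ωb / ωt) (hxb : xb = ωbb / ωbt)
    (hxt : xt = ωbt / ωtt) (hxbt : xbt = ωbbt / ωttb)
    (he1 : q - P * xb ≠ 0) (he2 : p - Q * xt ≠ 0) :
    xbt / x = ((P - q * xb) / (q - P * xb)) * ((Q - p * xt) / (p - Q * xt)) :=
  mKdV_to_lsG_general ωb ωt ωbt ωbb ωtt ωbbt ωttb p P q Q x xb xt xbt hωb hωbt hωtt hωttb hmkdvL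
    hmkdvM hx hxb hxt hxbt he1 he2
end

section
/- Consider the CABC system (1.5) for the dKdV equation: equations (u - v)*((B - a)/u + vt) - B + g = 0 (B-equation) and (B - a)/u - (g - a)/v - ub + vb = 0 (C-equation), where v-variables are computed: from the C-equation, vb is a fractional linear function of v; together with the B-equation shifted appropriately and the dKdV equation ubt - u = (B' - a)/ut - (B - A)/ub and S-equation u - vbt - (B - A)/ub + (g - a)/vt = 0, the value vbt computed in the three cube ways coincides. In particular: given generic initial values u, ub, ut, v ∈ ℂ, the value vbt obtained by (i) solving S for vbt after computing vt from B, (ii) solving the l-shifted B-equation for vbt after computing vb from C, and (iii) solving the m-shifted C-equation after computing ubt from the dKdV equation and vt from B, is the same rational function of (u, ub, ut, v). -/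
/-!
The B-equation and the C-equation give `vt` and `ub - vb` as fractions with the same
numerator `N = u (a - g) + v (B - a)`, namely `vt = N / (u (u - v))` and
`ub - vb = N / (u v)`. Substituting these, the S-equation and the `l`-shifted B-equation
both give `u + (g - a) / vt = (B - g) / (ub - vb) = u v (B - g) / N`, because
`N + (g - a) (u - v) = v (B - g)`. The `m`-shifted C-equation agrees with the S-equation
as soon as `ubt` is eliminated by the dKdV equation.
-/

namespace CABC

variable {K : Type*} [Field K] (u v a B g : K)

theorem B_solution_eq (hu : u ≠ 0) (huv : u - v ≠ 0) :
    (B - g) / (u - v) - (B - a) / u = (u * (a - g) + v * (B - a)) / (u * (u - v)) := by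
  field_simp
  ring

theorem C_solution_sub_eq (ub : K) (hu : u ≠ 0) (hv : v ≠ 0) :
    ub - (ub + (g - a) / v - (B - a) / u) = (u * (a - g) + v * (B - a)) / (u * v) := by
  field_simp
  ring

theorem S_solution_eq_lshift_B_solution (hu : u ≠ 0)
    (hN : u * (a - g) + v * (B - a) ≠ 0) :
    u + (g - a) / ((u * (a - g) + v * (B - a)) / (u * (u - v))) =
      (B - g) / ((u * (a - g) + v * (B - a)) / (u * v)) := by
  field_simp
  ring

end CABC

open CABC in
theorem dKdV_CABC_I_consistency_general
    (u ub ut ubt v vb vt a A B B' g : ℂ)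
    (hu : u ≠ 0) (hv : v ≠ 0)
    (hvt : vt ≠ 0)
    (huv : u - v ≠ 0)
    (hBeq : vt = (B - g) / (u - v) - (B - a) / u)
    (hCeq : vb = ub + (g - a) / v - (B - a) / u)
    (hAeq : ubt = u + (B' - a) / ut - (B - A) / ub) :
    (u - (B - A) / ub + (g - a) / vt = (B - g) / (ub - vb) - (B - A) / ub) ∧
    (u - (B - A) / ub + (g - a) / vt = ubt + (g - a) / vt - (B' - a) / ut) := by
  rw [B_solution_eq u v a B g hu huv] at hBeq
  have hN : u * (a - g) + v * (B - a) ≠ 0 := by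
    rintro hN
    exact hvt (by rw [hBeq, hN, zero_div])
  constructor
  · rw [hCeq, C_solution_sub_eq u v a B g ub hu hv, hBeq,
      ← S_solution_eq_lshift_B_solution u v a B g hu hN]
    ring
  · rw [hAeq]
    ring

/-- Consistency around a broken cube for the CABC system (1.5) of the dKdV
equation: given generic initial values `u, ub, ut, v`, the value `vbt`
obtained by the three computation paths (via S after B, via the `l`-shifted B
after C, via the `m`-shifted C after the dKdV equation and B) is the same. -/
theorem dKdV_CABC_I_consistency
    (u ub ut ubt v vb vt a A B B' g : ℂ)
    (hu : u ≠ 0) (hub : ub ≠ 0) (hut : ut ≠ 0) (hv : v ≠ 0)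
    (hvt : vt ≠ 0) (hvb : vb ≠ 0)
    (huv : u - v ≠ 0) (hubvb : ub - vb ≠ 0)
    (hBeq : vt = (B - g) / (u - v) - (B - a) / u)
    (hCeq : vb = ub + (g - a) / v - (B - a) / u)
    (hAeq : ubt = u + (B' - a) / ut - (B - A) / ub) :
    (u - (B - A) / ub + (g - a) / vt = (B - g) / (ub - vb) - (B - A) / ub) ∧
    (u - (B - A) / ub + (g - a) / vt = ubt + (g - a) / vt - (B' - a) / ut) :=
  dKdV_CABC_I_consistency_general u ub ut ubt v vb vt a A B B' g hu hv hvt huv hBeq hCeq hAeq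
end

section
/- The CABC system (2.1) satisfies the two tetrahedron relations: (A - g)/vbt = (A - B)/ub - (B - g)*u/(a - B - u*v) and vt = u + (B - g)*vb/(A - g - ub*vb). That is, if complex numbers u, ub, ut, ubt, v, vb, vt, vbt satisfy ubt - u = (B' - a)/ut - (B - A)/ub, u - vt - (B - A)/ub + (g - A)/vbt = 0, (u - vt)*((B - a)/u + v) - B + g = 0, and (B - a)/u - (g - A)/vb - ub + v = 0 (with all denominators nonzero), then both displayed relations hold. -/
/-!
Both relations express the increment `vt - u`. Equation B says
`(u - vt) * ((B - a) / u + v) = B - g`, which solves for `vt - u` once the factor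
`(B - a) / u + v = -(a - B - u v) / u` is nonzero; substituting into S gives the first relation.
Equation C rewrites the same factor as `-(A - g - ub vb) / vb`, which gives the second.
-/

namespace CABC

variable {K : Type*} [Field K] {u ub v vb vt a A B g : K}

theorem vt_sub_eq_of_B (hu : u ≠ 0) (hd : a - B - u * v ≠ 0)
    (hB : (u - vt) * ((B - a) / u + v) - B + g = 0) :
    vt - u = (B - g) * u / (a - B - u * v) := by
  rw [eq_div_iff hd]
  field_simp at hB
  linear_combination hB

theorem vt_sub_eq_of_B_of_C (hu : u ≠ 0) (hvb : vb ≠ 0) (hd : A - g - ub * vb ≠ 0)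
    (hB : (u - vt) * ((B - a) / u + v) - B + g = 0)
    (hC : (B - a) / u - (g - A) / vb - ub + v = 0) :
    vt - u = (B - g) * vb / (A - g - ub * vb) := by
  have hfactor : (B - a) / u + v = -(A - g - ub * vb) / vb := by
    field_simp at hC ⊢
    linear_combination hC
  rw [hfactor] at hB
  rw [eq_div_iff hd]
  field_simp at hB
  linear_combination hB

end CABC

theorem dKdV_CABC_II_tetrahedron_general
    (u ub v vb vt vbt a A B g : ℂ)
    (hu : u ≠ 0)
    (hvb : vb ≠ 0)
    (hd1 : a - B - u * v ≠ 0) (hd2 : A - g - ub * vb ≠ 0)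
    (hS : u - vt - (B - A) / ub + (g - A) / vbt = 0)
    (hB : (u - vt) * ((B - a) / u + v) - B + g = 0)
    (hC : (B - a) / u - (g - A) / vb - ub + v = 0) :
    (A - g) / vbt = (A - B) / ub - (B - g) * u / (a - B - u * v) ∧
    vt = u + (B - g) * vb / (A - g - ub * vb) := by
  constructor
  · rw [← CABC.vt_sub_eq_of_B hu hd1 hB]
    linear_combination -hS
  · rw [← CABC.vt_sub_eq_of_B_of_C hu hvb hd2 hB hC]
    ring

/-- Tetrahedron property of the CABC system (2.1): the two tetrahedron
relations `(A - g)/vbt = (A - B)/ub - (B - g) u/(a - B - u v)` and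
`vt = u + (B - g) vb/(A - g - ub vb)` follow from the CABC system. -/
theorem dKdV_CABC_II_tetrahedron
    (u ub ut ubt v vb vt vbt a A B B' g : ℂ)
    (hu : u ≠ 0) (hub : ub ≠ 0) (hut : ut ≠ 0)
    (hvb : vb ≠ 0) (hvbt : vbt ≠ 0)
    (hd1 : a - B - u * v ≠ 0) (hd2 : A - g - ub * vb ≠ 0)
    (hA : ubt - u = (B' - a) / ut - (B - A) / ub)
    (hS : u - vt - (B - A) / ub + (g - A) / vbt = 0)
    (hB : (u - vt) * ((B - a) / u + v) - B + g = 0)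
    (hC : (B - a) / u - (g - A) / vb - ub + v = 0) :
    (A - g) / vbt = (A - B) / ub - (B - g) * u / (a - B - u * v) ∧
    vt = u + (B - g) * vb / (A - g - ub * vb) :=
  dKdV_CABC_II_tetrahedron_general u ub v vb vt vbt a A B g hu hvb hd1 hd2 hS hB hC
end
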